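/- arXiv:2107.13340 — 2 statements merged into one kernel-verified Lean document; each statement's English description precedes it below -/
import Mathlib

section
/- Let θ > 0 and define F(u) := θ ∫₀^u e^{-t} ₁F₁(θ,1,t) dt, where ₁F₁(θ,1,t) = Σ_{n≥0} θ^{(n)} tⁿ/(n!)² is Kummer's confluent hypergeometric function. Then for every u ≥ 0, F(u) = θ e^{-u} Σ_{n=0}^{∞} (θ^{(n)}/n!) Σ_{k=n+1}^{∞} u^k/k!. -/
/-!
Expanding `₁F₁` termwise gives `F(u) = θ ∑ θ^{(n)}/(n!)² ∫₀^u e^{-t} tⁿ dt`; the interchange is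
dominated convergence, since `|θ^{(n)}| ≤ (|θ|+1)ⁿ n!` makes the coefficients decay like `Kⁿ/n!`.
The remaining integral is an incomplete gamma function: `e^{-t} ∑_{k≤n} t^k/k!` has derivative
`-e^{-t} tⁿ/n!`, so `∫₀^u e^{-t} tⁿ dt = n! (1 - e^{-u} ∑_{k≤n} u^k/k!) = n! e^{-u} ∑_{k>n} u^k/k!`.
-/

open MeasureTheory

/-- The rising factorial `θ^{(n)} = θ(θ+1)⋯(θ+n-1)`, with `θ^{(0)} = 1`. -/
noncomputable def risingFactorial (θ : ℝ) (n : ℕ) : ℝ := ∏ i ∈ Finset.range n, (θ + (i : ℝ))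

/-- Kummer's confluent hypergeometric function `₁F₁(θ, 1, t) = ∑_{n≥0} θ^{(n)} tⁿ/(n!)²`. -/
noncomputable def kummerM (θ t : ℝ) : ℝ :=
  ∑' n : ℕ, risingFactorial θ n * t ^ n / ((Nat.factorial n : ℝ)) ^ 2

/-- `F(u) = θ ∫₀^u e^{-t} ₁F₁(θ,1,t) dt`. -/
noncomputable def Fkum (θ u : ℝ) : ℝ := θ * ∫ t in (0:ℝ)..u, Real.exp (-t) * kummerM θ t

open Finset Real
open scoped Nat

lemma abs_risingFactorial_le (θ : ℝ) (n : ℕ) :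
    |risingFactorial θ n| ≤ (|θ| + 1) ^ n * n ! := by
  induction n with
  | zero => simp [risingFactorial]
  | succ n ih =>
    have hfactor : |θ + n| ≤ (|θ| + 1) * (n + 1) := by
      calc |θ + n| ≤ |θ| + n := by simpa using abs_add_le θ n
        _ ≤ (|θ| + 1) * (n + 1) := by nlinarith [abs_nonneg θ, n.cast_nonneg (α := ℝ)]
    rw [risingFactorial, prod_range_succ, ← risingFactorial, abs_mul]
    calc |risingFactorial θ n| * |θ + n| ≤ ((|θ| + 1) ^ n * n !) * ((|θ| + 1) * (n + 1)) :=
          mul_le_mul ih hfactor (abs_nonneg _) (by positivity)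
      _ = (|θ| + 1) ^ (n + 1) * (n + 1)! := by push_cast [Nat.factorial_succ]; ring

lemma summable_abs_risingFactorial_div_sq_mul_pow (θ R : ℝ) :
    Summable fun n => |risingFactorial θ n / (n ! : ℝ) ^ 2| * R ^ n := by
  refine .of_norm_bounded (Real.summable_pow_div_factorial ((|θ| + 1) * |R|)) fun n => ?_
  have hfac : (0 : ℝ) < n ! := by positivity
  rw [norm_mul, norm_pow, Real.norm_eq_abs, Real.norm_eq_abs, abs_abs, abs_div, abs_pow,
    Nat.abs_cast]
  calc |risingFactorial θ n| / (n ! : ℝ) ^ 2 * |R| ^ n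
      ≤ (|θ| + 1) ^ n * n ! / (n ! : ℝ) ^ 2 * |R| ^ n := by
        gcongr; exact abs_risingFactorial_le θ n
    _ = ((|θ| + 1) * |R|) ^ n / n ! := by rw [mul_pow]; field_simp

lemma hasSum_intervalIntegral_mul_pow {g : ℝ → ℝ} {a b R : ℝ} {c : ℕ → ℝ}
    (hg : IntervalIntegrable g volume a b) (hc : Summable fun n => |c n| * R ^ n)
    (hR : ∀ t ∈ Set.uIoc a b, |t| ≤ R) :
    HasSum (fun n => c n * ∫ t in a..b, g t * t ^ n) (∫ t in a..b, g t * ∑' n, c n * t ^ n) := by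
  have hterm_le : ∀ t ∈ Set.uIoc a b, ∀ n, |c n * t ^ n| ≤ |c n| * R ^ n := fun t ht n => by
    rw [abs_mul, abs_pow]
    gcongr
    exact hR t ht
  simp_rw [← intervalIntegral.integral_const_mul]
  refine intervalIntegral.hasSum_integral_of_dominated_convergence
    (fun n t => ‖g t‖ * (|c n| * R ^ n)) (fun n => ?_) (fun n => ae_of_all _ fun t ht => ?_)
    (ae_of_all _ fun t _ => hc.mul_left _) ?_ (ae_of_all _ fun t ht => ?_)
  · exact (hg.def'.aestronglyMeasurable.mul (continuous_pow n).aestronglyMeasurable).const_mul _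
  · rw [Real.norm_eq_abs, Real.norm_eq_abs, mul_left_comm, abs_mul (g t)]
    exact mul_le_mul_of_nonneg_left (hterm_le t ht n) (abs_nonneg _)
  · simp_rw [tsum_mul_left]
    exact hg.norm.mul_const _
  · have hsum : Summable fun n => c n * t ^ n :=
      .of_norm_bounded hc fun n => by simpa using hterm_le t ht n
    simpa only [mul_left_comm] using hsum.hasSum.mul_left (g t)

lemma tsum_pow_div_factorial_add (u : ℝ) (m : ℕ) :
    ∑' k : ℕ, u ^ (m + k) / (m + k)! = exp u - ∑ k ∈ range m, u ^ k / k ! := by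
  have h := (hasSum_nat_add_iff' m).mpr (NormedSpace.expSeries_div_hasSum_exp u)
  rw [← exp_eq_exp_ℝ] at h
  simpa only [add_comm _ m] using h.tsum_eq

lemma hasDerivAt_exp_neg_mul_sum_pow_div_factorial (n : ℕ) (t : ℝ) :
    HasDerivAt (fun t => exp (-t) * ∑ k ∈ range (n + 1), t ^ k / k !)
      (-(exp (-t) * t ^ n / n !)) t := by
  induction n with
  | zero => simpa using (hasDerivAt_neg t).exp
  | succ n ih =>
    simp_rw [sum_range_succ _ (n + 1), mul_add]
    have hterm : HasDerivAt (fun t => exp (-t) * (t ^ (n + 1) / (n + 1)!))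
        (-(exp (-t) * t ^ (n + 1) / (n + 1)!) + exp (-t) * t ^ n / n !) t := by
      refine ((hasDerivAt_neg t).exp.mul
        ((hasDerivAt_pow (n + 1) t).div_const ((n + 1)! : ℝ))).congr_deriv ?_
      push_cast [Nat.factorial_succ, Nat.add_sub_cancel]
      field_simp
    exact (ih.add hterm).congr_deriv (by ring)

lemma integral_exp_neg_mul_pow (u : ℝ) (n : ℕ) :
    ∫ t in (0 : ℝ)..u, exp (-t) * t ^ n
      = n ! * exp (-u) * ∑' k : ℕ, u ^ (n + 1 + k) / (n + 1 + k)! := by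
  have hderiv (t : ℝ) : HasDerivAt (fun t => -n ! * (exp (-t) * ∑ k ∈ range (n + 1), t ^ k / k !))
      (exp (-t) * t ^ n) t :=
    ((hasDerivAt_exp_neg_mul_sum_pow_div_factorial n t).const_mul _).congr_deriv (by field_simp)
  rw [intervalIntegral.integral_eq_sub_of_hasDerivAt (fun t _ => hderiv t)
    ((by fun_prop : Continuous fun t : ℝ => exp (-t) * t ^ n).intervalIntegrable _ _),
    tsum_pow_div_factorial_add]
  have hsum_zero : ∑ k ∈ range (n + 1), (0 : ℝ) ^ k / k ! = 1 := by simp [sum_range_succ']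
  rw [hsum_zero, neg_zero, exp_zero, exp_neg]
  field_simp
  ring

theorem Fkum_series_general (θ : ℝ) (u : ℝ) :
    Fkum θ u = θ * Real.exp (-u) *
      ∑' n : ℕ, (risingFactorial θ n / (Nat.factorial n : ℝ)) *
        ∑' k : ℕ, u ^ (n + 1 + k) / (Nat.factorial (n + 1 + k) : ℝ) := by
  have hkummer : ∀ t, kummerM θ t = ∑' n, risingFactorial θ n / (n ! : ℝ) ^ 2 * t ^ n := fun t =>
    tsum_congr fun n => mul_div_right_comm _ _ _
  have hswap := hasSum_intervalIntegral_mul_pow (g := fun t => exp (-t)) (a := 0) (b := u)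
    ((by fun_prop : Continuous fun t : ℝ => exp (-t)).intervalIntegrable _ _)
    (summable_abs_risingFactorial_div_sq_mul_pow θ |u|) fun t ht => by
      simpa using Set.abs_sub_left_of_mem_uIcc (Set.uIoc_subset_uIcc ht)
  have hterm (n : ℕ) : risingFactorial θ n / (n ! : ℝ) ^ 2 * ∫ t in (0 : ℝ)..u, exp (-t) * t ^ n
      = exp (-u) * (risingFactorial θ n / n ! *
        ∑' k : ℕ, u ^ (n + 1 + k) / (n + 1 + k)!) := by
    rw [integral_exp_neg_mul_pow]
    field_simp
  simp_rw [Fkum, hkummer]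
  rw [← hswap.tsum_eq, tsum_congr hterm, tsum_mul_left, mul_assoc]

/-- For `θ > 0` and every `u ≥ 0`,
`F(u) = θ e^{-u} ∑_{n=0}^∞ (θ^{(n)}/n!) ∑_{k=n+1}^∞ u^k/k!`. -/
theorem Fkum_series (θ : ℝ) (hθ : 0 < θ) (u : ℝ) (hu : 0 ≤ u) :
    Fkum θ u = θ * Real.exp (-u) *
      ∑' n : ℕ, (risingFactorial θ n / (Nat.factorial n : ℝ)) *
        ∑' k : ℕ, u ^ (n + 1 + k) / (Nat.factorial (n + 1 + k) : ℝ) :=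
  Fkum_series_general θ u
end

section
/- Let θ > 0 and F(u) := θ ∫₀^u e^{-t} ₁F₁(θ,1,t) dt. There exists a constant C > 0 (depending on θ) such that for all u > 0: F(u) ≤ C·u if u ≤ 1, and F(u) ≤ C·u^θ if u ≥ 1. -/
open MeasureTheory

/-!
Since `θ + n ≤ (n + 1) e^{(θ-1)/(n+1)}`, we have `θ^{(n)} ≤ n! e^{(θ-1) H_n}`, and the bounds
`log (n+1) ≤ H_n ≤ 1 + log (n+1)` turn this into `θ^{(n)} ≤ e^{|θ-1|} n! (n+1)^{θ-1}`.
Writing `(n+1)^{θ-1} = t^{θ-1} x^{θ-1}` with `x = (n+1)/t` and using `x^{θ-1} ≤ x⁻¹ + e^{θx}`,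
the series of `₁F₁(θ,1,t)` is dominated by `t^{θ-1}` times two exponential series, whence
`e^{-t} ₁F₁(θ,1,t) ≤ C t^{θ-1}` for `t ≥ 1`. Integrating this over `[1,u]` gives the `u^θ` bound,
while on `[0,1]` the integrand is at most `₁F₁(θ,1,1)` because `₁F₁(θ,1,·)` is increasing.
-/

open Real Finset Set
open scoped Nat

noncomputable def kummerTerm (θ t : ℝ) (n : ℕ) : ℝ :=
  risingFactorial θ n * t ^ n / (n ! : ℝ) ^ 2

theorem hasSum_pow_div_factorial (x : ℝ) : HasSum (fun n => x ^ n / n !) (exp x) := by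
  rw [exp_eq_exp_ℝ]
  exact NormedSpace.expSeries_div_hasSum_exp x

section RisingFactorial

variable {θ : ℝ}

theorem risingFactorial_succ (θ : ℝ) (n : ℕ) :
    risingFactorial θ (n + 1) = risingFactorial θ n * (θ + n) :=
  prod_range_succ _ _

theorem risingFactorial_nonneg (hθ : 0 ≤ θ) (n : ℕ) : 0 ≤ risingFactorial θ n :=
  prod_nonneg fun _ _ => by positivity

theorem risingFactorial_le_factorial_mul_pow (hθ : 0 ≤ θ) (n : ℕ) :
    risingFactorial θ n ≤ n ! * max θ 1 ^ n := by
  rw [risingFactorial, ← prod_range_add_one_eq_factorial, Nat.cast_prod,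
    show max θ 1 ^ n = ∏ _i ∈ range n, max θ 1 by simp, ← prod_mul_distrib]
  gcongr with i
  push_cast
  nlinarith [le_max_left θ 1, le_max_right θ 1, (i.cast_nonneg : (0 : ℝ) ≤ i)]

theorem risingFactorial_le_factorial_mul_exp_harmonic (hθ : 0 ≤ θ) (n : ℕ) :
    risingFactorial θ n ≤ n ! * exp ((θ - 1) * harmonic n) := by
  induction n with
  | zero => simp [risingFactorial]
  | succ n ih =>
    have step : θ + n ≤ (n + 1) * exp ((θ - 1) / (n + 1)) := by
      calc θ + n = (n + 1) * ((θ - 1) / (n + 1) + 1) := by field_simp; ring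
        _ ≤ _ := by gcongr; exact add_one_le_exp _
    rw [risingFactorial_succ, harmonic_succ, Nat.factorial_succ]
    calc risingFactorial θ n * (θ + n)
        ≤ (n ! * exp ((θ - 1) * harmonic n)) * ((n + 1) * exp ((θ - 1) / (n + 1))) := by
          gcongr
      _ = _ := by
          push_cast
          rw [mul_add, exp_add]
          field_simp

theorem risingFactorial_le_factorial_mul_rpow (hθ : 0 ≤ θ) (n : ℕ) :
    risingFactorial θ n ≤ n ! * (exp |θ - 1| * (n + 1 : ℝ) ^ (θ - 1)) := by
  have hlower : log (n + 1) ≤ harmonic n := by exact_mod_cast log_add_one_le_harmonic n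
  have hupper : (harmonic n : ℝ) ≤ 1 + log (n + 1) := by
    rcases n.eq_zero_or_pos with rfl | hn
    · simp
    · exact (harmonic_le_one_add_log n).trans (by gcongr; linarith)
  have hexp : (θ - 1) * harmonic n ≤ |θ - 1| + log (n + 1) * (θ - 1) := by
    have : (θ - 1) * (harmonic n - log (n + 1)) ≤ |θ - 1| :=
      calc _ ≤ |θ - 1| * |(harmonic n : ℝ) - log (n + 1)| := by rw [← abs_mul]; exact le_abs_self _
        _ ≤ |θ - 1| := mul_le_of_le_one_right (abs_nonneg _)
            (abs_le.mpr ⟨by linarith, by linarith⟩)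
    linarith
  refine (risingFactorial_le_factorial_mul_exp_harmonic hθ n).trans ?_
  rw [rpow_def_of_pos (by positivity), ← exp_add]
  gcongr

end RisingFactorial

section KummerSeries

variable {θ t : ℝ}

theorem kummerTerm_nonneg (hθ : 0 ≤ θ) (ht : 0 ≤ t) (n : ℕ) : 0 ≤ kummerTerm θ t n := by
  have := risingFactorial_nonneg hθ n
  unfold kummerTerm
  positivity

theorem kummerTerm_le_mul_pow_div_factorial {D : ℝ} {n : ℕ}
    (h : risingFactorial θ n ≤ n ! * D) (ht : 0 ≤ t) :
    kummerTerm θ t n ≤ D * (t ^ n / n !) := by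
  have hfac : (0 : ℝ) < n ! := by positivity
  calc kummerTerm θ t n ≤ (n ! * D) * t ^ n / (n ! : ℝ) ^ 2 := by unfold kummerTerm; gcongr
    _ = D * (t ^ n / n !) := by field_simp

theorem summable_kummerTerm (hθ : 0 ≤ θ) (ht : 0 ≤ t) : Summable (kummerTerm θ t) :=
  .of_nonneg_of_le (kummerTerm_nonneg hθ ht)
    (fun n => (kummerTerm_le_mul_pow_div_factorial
      (risingFactorial_le_factorial_mul_pow hθ n) ht).trans_eq (by ring))
    (summable_pow_div_factorial (max θ 1 * t))

theorem kummerM_nonneg (hθ : 0 ≤ θ) (ht : 0 ≤ t) : 0 ≤ kummerM θ t :=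
  tsum_nonneg (kummerTerm_nonneg hθ ht)

theorem monotoneOn_kummerM (hθ : 0 ≤ θ) : MonotoneOn (kummerM θ) (Ici 0) := by
  intro s hs t ht hst
  refine (summable_kummerTerm hθ hs).tsum_le_tsum (fun n => ?_) (summable_kummerTerm hθ ht)
  have := risingFactorial_nonneg hθ n
  gcongr

theorem rpow_sub_one_le_inv_add_exp_mul (hθ : 0 ≤ θ) {x : ℝ} (hx : 0 < x) :
    x ^ (θ - 1) ≤ x⁻¹ + exp (θ * x) := by
  rcases le_total x 1 with hx1 | hx1
  · have : x ^ (θ - 1) ≤ x⁻¹ := by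
      simpa [rpow_neg_one] using rpow_le_rpow_of_exponent_ge hx hx1 (by linarith : -1 ≤ θ - 1)
    linarith [exp_pos (θ * x)]
  · have : x ^ (θ - 1) ≤ exp (θ * x) :=
      calc x ^ (θ - 1) ≤ x ^ θ := rpow_le_rpow_of_exponent_le hx1 (by linarith)
        _ = exp (log x * θ) := rpow_def_of_pos hx _
        _ ≤ exp (θ * x) := by
            rw [mul_comm]; gcongr; exact log_le_self hx.le
    linarith [inv_pos.mpr hx]

theorem kummerTerm_le (hθ : 0 ≤ θ) (ht : 0 < t) (n : ℕ) :
    kummerTerm θ t n ≤ exp |θ - 1| * t ^ (θ - 1) *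
      (t ^ (n + 1) / (n + 1)! + exp (θ / t) * ((t * exp (θ / t)) ^ n / n !)) := by
  have hn : (0 : ℝ) < n + 1 := by positivity
  have hsplit : (n + 1 : ℝ) ^ (θ - 1) ≤ t ^ (θ - 1) * (t / (n + 1) + exp (θ * ((n + 1) / t))) :=
    calc (n + 1 : ℝ) ^ (θ - 1) = t ^ (θ - 1) * ((n + 1) / t) ^ (θ - 1) := by
          rw [div_rpow hn.le ht.le, mul_div_cancel₀ _ (rpow_pos_of_pos ht _).ne']
      _ ≤ t ^ (θ - 1) * (((n + 1) / t)⁻¹ + exp (θ * ((n + 1) / t))) := by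
          gcongr; exact rpow_sub_one_le_inv_add_exp_mul hθ (by positivity)
      _ = _ := by rw [inv_div]
  have hexp : exp (θ * ((n + 1) / t)) = exp (θ / t) * exp (θ / t) ^ n := by
    rw [← exp_nat_mul, ← exp_add]; ring_nf
  calc kummerTerm θ t n ≤ exp |θ - 1| * (n + 1 : ℝ) ^ (θ - 1) * (t ^ n / n !) :=
        kummerTerm_le_mul_pow_div_factorial
          ((risingFactorial_le_factorial_mul_rpow hθ n).trans_eq (by ring)) ht.le
    _ ≤ exp |θ - 1| * (t ^ (θ - 1) * (t / (n + 1) + exp (θ * ((n + 1) / t)))) * (t ^ n / n !) := by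
        gcongr
    _ = _ := by
        rw [hexp, Nat.factorial_succ, mul_pow]
        push_cast
        field_simp
        ring

theorem kummerM_le (hθ : 0 ≤ θ) (ht : 0 < t) :
    kummerM θ t ≤ exp |θ - 1| * t ^ (θ - 1) *
      (exp t - 1 + exp (θ / t) * exp (t * exp (θ / t))) := by
  have hshift : HasSum (fun n => t ^ (n + 1) / (n + 1)!) (exp t - 1) := by
    simpa using (hasSum_nat_add_iff' 1).mpr (hasSum_pow_div_factorial t)
  exact hasSum_le (kummerTerm_le hθ ht) (summable_kummerTerm hθ ht.le).hasSum
    ((hshift.add ((hasSum_pow_div_factorial _).mul_left _)).mul_left _)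

end KummerSeries

theorem exists_exp_neg_mul_kummerM_le_mul_rpow {θ : ℝ} (hθ : 0 ≤ θ) :
    ∃ C > 0, ∀ t, 1 ≤ t → exp (-t) * kummerM θ t ≤ C * t ^ (θ - 1) := by
  refine ⟨exp |θ - 1| * (1 + exp θ * exp (θ * exp θ)), by positivity, fun t ht => ?_⟩
  have ht0 : 0 < t := by linarith
  have hθt : θ / t ≤ θ := div_le_self hθ ht
  -- the tangent line of `exp` at `θ / t`, evaluated at `0`
  have hconv : exp (θ / t) ≤ 1 + θ / t * exp (θ / t) := by
    have h := add_one_le_exp (-(θ / t))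
    have h' : exp (-(θ / t)) * exp (θ / t) = 1 := by rw [← exp_add]; simp
    nlinarith [exp_pos (θ / t)]
  have hgrowth : t * exp (θ / t) - t ≤ θ * exp θ := by
    have : t * (θ / t * exp (θ / t)) = θ * exp (θ / t) := by field_simp
    nlinarith [exp_le_exp.mpr hθt]
  have hfactor : exp (-t) * (exp t - 1 + exp (θ / t) * exp (t * exp (θ / t)))
      ≤ 1 + exp θ * exp (θ * exp θ) := by
    rw [mul_add, mul_sub, ← exp_add, neg_add_cancel, exp_zero, mul_left_comm, ← exp_add]
    have : exp (-t + t * exp (θ / t)) ≤ exp (θ * exp θ) := exp_le_exp.mpr (by linarith)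
    have : exp (θ / t) * exp (-t + t * exp (θ / t)) ≤ exp θ * exp (θ * exp θ) := by gcongr
    linarith [exp_pos (-t)]
  calc exp (-t) * kummerM θ t
      ≤ exp (-t) * (exp |θ - 1| * t ^ (θ - 1) *
          (exp t - 1 + exp (θ / t) * exp (t * exp (θ / t)))) := by
        gcongr; exact kummerM_le hθ ht0
    _ = exp |θ - 1| * t ^ (θ - 1) *
          (exp (-t) * (exp t - 1 + exp (θ / t) * exp (t * exp (θ / t)))) := by ring
    _ ≤ exp |θ - 1| * t ^ (θ - 1) * (1 + exp θ * exp (θ * exp θ)) := by gcongr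
    _ = _ := by ring

section Integral

variable {θ : ℝ}

theorem intervalIntegrable_exp_neg_mul_kummerM (hθ : 0 ≤ θ) {a b : ℝ} (ha : 0 ≤ a) (hb : 0 ≤ b) :
    IntervalIntegrable (fun t => exp (-t) * kummerM θ t) volume a b :=
  ((monotoneOn_kummerM hθ).mono fun _ hx => (le_inf ha hb).trans hx.1).intervalIntegrable
    |>.continuousOn_mul (by fun_prop)

theorem integral_exp_neg_mul_kummerM_le (hθ : 0 ≤ θ) {u : ℝ} (hu : 0 ≤ u) (hu1 : u ≤ 1) :
    ∫ t in (0 : ℝ)..u, exp (-t) * kummerM θ t ≤ kummerM θ 1 * u := by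
  have hle : ∀ t ∈ Icc 0 u, exp (-t) * kummerM θ t ≤ kummerM θ 1 := fun t ht =>
    calc exp (-t) * kummerM θ t ≤ 1 * kummerM θ 1 := by
          gcongr
          · exact kummerM_nonneg hθ ht.1
          · exact exp_le_one_iff.mpr (by linarith [ht.1])
          · exact monotoneOn_kummerM hθ ht.1 (mem_Ici.mpr zero_le_one) (ht.2.trans hu1)
      _ = kummerM θ 1 := one_mul _
  simpa [mul_comm] using intervalIntegral.integral_mono_on hu
    (intervalIntegrable_exp_neg_mul_kummerM hθ le_rfl hu) intervalIntegrable_const hle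

end Integral

theorem integral_le_mul_rpow_of_le {f : ℝ → ℝ} {θ C u : ℝ} (hθ : 0 < θ) (hu : 1 ≤ u)
    (hf : IntervalIntegrable f volume 1 u) (hle : ∀ t ∈ Icc 1 u, f t ≤ C * t ^ (θ - 1)) :
    ∫ t in (1 : ℝ)..u, f t ≤ C * ((u ^ θ - 1) / θ) := by
  have hθ' : -1 < θ - 1 := by linarith
  calc ∫ t in (1 : ℝ)..u, f t ≤ ∫ t in (1 : ℝ)..u, C * t ^ (θ - 1) :=
        intervalIntegral.integral_mono_on hu hf
          ((intervalIntegral.intervalIntegrable_rpow' hθ').const_mul C) hle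
    _ = C * ((u ^ θ - 1) / θ) := by
        rw [intervalIntegral.integral_const_mul, integral_rpow (Or.inl hθ'), sub_add_cancel,
          one_rpow]

/-- For `θ > 0` there is a constant `C > 0` such that for all `u > 0`:
`F(u) ≤ C·u` if `u ≤ 1`, and `F(u) ≤ C·u^θ` if `u ≥ 1`. -/
theorem Fkum_upper_bound (θ : ℝ) (hθ : 0 < θ) :
    ∃ C : ℝ, 0 < C ∧ ∀ u : ℝ, 0 < u →
      (u ≤ 1 → Fkum θ u ≤ C * u) ∧ (1 ≤ u → Fkum θ u ≤ C * u ^ θ) := by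
  obtain ⟨C, hC, htail⟩ := exists_exp_neg_mul_kummerM_le_mul_rpow hθ.le
  set B := kummerM θ 1
  have hB : 0 ≤ B := kummerM_nonneg hθ.le zero_le_one
  refine ⟨θ * B + C, by positivity, fun u hu => ⟨fun hu1 => ?_, fun hu1 => ?_⟩⟩
  · calc Fkum θ u ≤ θ * (B * u) :=
          mul_le_mul_of_nonneg_left (integral_exp_neg_mul_kummerM_le hθ.le hu.le hu1) hθ.le
      _ ≤ (θ * B + C) * u := by nlinarith
  · have h01 := integral_exp_neg_mul_kummerM_le hθ.le zero_le_one le_rfl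
    have h1u := integral_le_mul_rpow_of_le hθ hu1
      (intervalIntegrable_exp_neg_mul_kummerM hθ.le zero_le_one hu.le) fun t ht => htail t ht.1
    have huθ : 1 ≤ u ^ θ := one_le_rpow hu1 hθ.le
    rw [Fkum, ← intervalIntegral.integral_add_adjacent_intervals
      (intervalIntegrable_exp_neg_mul_kummerM hθ.le le_rfl zero_le_one)
      (intervalIntegrable_exp_neg_mul_kummerM hθ.le zero_le_one hu.le)]
    calc _ ≤ θ * (B * 1 + C * ((u ^ θ - 1) / θ)) := by gcongr
      _ = θ * B + C * (u ^ θ - 1) := by field_simp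
      _ ≤ (θ * B + C) * u ^ θ := by
          nlinarith [mul_nonneg (mul_nonneg hθ.le hB) (sub_nonneg.mpr huθ)]
end
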